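/- Let R be the 4×4 rook's graph: the simple graph on ZMod 4 × ZMod 4 in which (i,j) and (i',j') are adjacent iff they are distinct and (i = i' or j = j'). Then the maximum number of pairwise edge-disjoint triangles in R equals 8. -/

import Mathlib

/-- The 4×4 rook's graph: distinct vertices of `ZMod 4 × ZMod 4` are adjacent iff they agree
in the first or in the second coordinate. -/
def rook : SimpleGraph (ZMod 4 × ZMod 4) where
  Adj a b := a ≠ b ∧ (a.1 = b.1 ∨ a.2 = b.2)
  symm := by
    first
      | (constructor; intro a b h; exact ⟨h.1.symm, h.2.imp Eq.symm Eq.symm⟩)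
      | (intro a b h; exact ⟨h.1.symm, h.2.imp Eq.symm Eq.symm⟩)
  loopless := by
    first
      | (constructor; intro a h; exact h.1 rfl)
      | (intro a h; exact h.1 rfl)

/-- The edge set of a triangle `t` inside a graph `G`: the edges of `G` with both
endpoints in `t`. -/
def triEdges {V : Type*} (G : SimpleGraph V) (t : Finset V) : Set (Sym2 V) :=
  {e | e ∈ G.edgeSet ∧ ∀ v ∈ e, v ∈ t}

instance : DecidableRel rook.Adj := fun a b => inferInstanceAs (Decidable (a ≠ b ∧ _))

lemma disj_of_small_inter {V : Type*} [DecidableEq V] (G : SimpleGraph V)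
    (t₁ t₂ : Finset V) (h : (t₁ ∩ t₂).card ≤ 1) :
    Disjoint (triEdges G t₁) (triEdges G t₂) := by
  rw [Set.disjoint_left]
  intro e he1 he2
  induction e with
  | _ u v =>
    obtain ⟨hadj1, hm1⟩ := he1
    obtain ⟨_, hm2⟩ := he2
    rw [SimpleGraph.mem_edgeSet] at hadj1
    have hne : u ≠ v := G.ne_of_adj hadj1
    have hu : u ∈ t₁ ∩ t₂ := Finset.mem_inter.2
      ⟨hm1 u (Sym2.mem_mk_left u v), hm2 u (Sym2.mem_mk_left u v)⟩
    have hv : v ∈ t₁ ∩ t₂ := Finset.mem_inter.2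
      ⟨hm1 v (Sym2.mem_mk_right u v), hm2 v (Sym2.mem_mk_right u v)⟩
    have : 1 < (t₁ ∩ t₂).card := Finset.one_lt_card.2 ⟨u, hu, v, hv, hne⟩
    omega

lemma triLine (a b c : ZMod 4 × ZMod 4) (hab : rook.Adj a b) (hac : rook.Adj a c)
    (hbc : rook.Adj b c) : (a.1 = b.1 ∧ a.1 = c.1) ∨ (a.2 = b.2 ∧ a.2 = c.2) := by
  obtain ⟨hne1, h1⟩ := hab
  obtain ⟨hne2, h2⟩ := hac
  obtain ⟨hne3, h3⟩ := hbc
  rcases h1 with h1 | h1 <;> rcases h3 with h3 | h3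
  · exact Or.inl ⟨h1, h1.trans h3⟩
  · rcases h2 with h2 | h2
    · exact Or.inl ⟨h1, h2⟩
    · exact Or.inr ⟨h2.trans h3.symm, h2⟩
  · rcases h2 with h2 | h2
    · exact Or.inl ⟨h2.trans h3.symm, h2⟩
    · exact Or.inr ⟨h1, h2⟩
  · exact Or.inr ⟨h1, h1.trans h3⟩

lemma exists_line (t : Finset (ZMod 4 × ZMod 4)) (ht : rook.IsNClique 3 t) :
    (∃ r, ∀ v ∈ t, v.1 = r) ∨ (∃ c, ∀ v ∈ t, v.2 = c) := by
  obtain ⟨a, b, c, hab, hac, hbc, rfl⟩ := Finset.card_eq_three.mp ht.2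
  have ha : a ∈ ({a, b, c} : Finset _) := by simp
  have hb : b ∈ ({a, b, c} : Finset _) := by simp
  have hc : c ∈ ({a, b, c} : Finset _) := by simp
  have h1 : rook.Adj a b := ht.1 (by simp) (by simp) hab
  have h2 : rook.Adj a c := ht.1 (by simp) (by simp) hac
  have h3 : rook.Adj b c := ht.1 (by simp) (by simp) hbc
  rcases triLine a b c h1 h2 h3 with ⟨p, q⟩ | ⟨p, q⟩
  · left; exact ⟨a.1, by intro v hv; simp at hv; rcases hv with rfl | rfl | rfl
      <;> simp [p.symm, q.symm]⟩
  · right; exact ⟨a.2, by intro v hv; simp at hv; rcases hv with rfl | rfl | rfl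
      <;> simp [p.symm, q.symm]⟩

open Classical in
noncomputable def lineOf (t : Finset (ZMod 4 × ZMod 4)) : ZMod 4 ⊕ ZMod 4 :=
  if h : ∃ r, ∀ v ∈ t, v.1 = r then .inl h.choose
  else if h2 : ∃ c, ∀ v ∈ t, v.2 = c then .inr h2.choose
  else .inl 0

def lineSet : ZMod 4 ⊕ ZMod 4 → Finset (ZMod 4 × ZMod 4)
  | .inl r => Finset.univ.filter (fun v => v.1 = r)
  | .inr c => Finset.univ.filter (fun v => v.2 = c)

lemma subset_lineOf (t : Finset (ZMod 4 × ZMod 4)) (ht : rook.IsNClique 3 t) :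
    t ⊆ lineSet (lineOf t) := by
  intro v hv
  by_cases h : ∃ r, ∀ v ∈ t, v.1 = r
  · rw [lineOf, dif_pos h]
    exact Finset.mem_filter.2 ⟨Finset.mem_univ v, h.choose_spec v hv⟩
  · have h2 : ∃ c, ∀ v ∈ t, v.2 = c := by
      rcases exists_line t ht with h' | h' <;> tauto
    rw [lineOf, dif_neg h, dif_pos h2]
    exact Finset.mem_filter.2 ⟨Finset.mem_univ v, h2.choose_spec v hv⟩

lemma card_lineSet (l : ZMod 4 ⊕ ZMod 4) : (lineSet l).card = 4 := by
  have h1 : ∀ r : ZMod 4, (Finset.univ.filter (fun v : ZMod 4 × ZMod 4 => v.1 = r)).card = 4 := by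
    decide
  have h2 : ∀ c : ZMod 4, (Finset.univ.filter (fun v : ZMod 4 × ZMod 4 => v.2 = c)).card = 4 := by
    decide
  rcases l with r | c
  · exact h1 r
  · exact h2 c

lemma adj_of_mem_lineSet (l : ZMod 4 ⊕ ZMod 4) (u v : ZMod 4 × ZMod 4)
    (hu : u ∈ lineSet l) (hv : v ∈ lineSet l) (hne : u ≠ v) : rook.Adj u v := by
  rcases l with r | c <;> simp [lineSet] at hu hv
  · exact ⟨hne, Or.inl (hu.trans hv.symm)⟩
  · exact ⟨hne, Or.inr (hu.trans hv.symm)⟩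

def tri : ZMod 4 ⊕ ZMod 4 → Finset (ZMod 4 × ZMod 4)
  | .inl r => {(r, 0), (r, 1), (r, 2)}
  | .inr c => {(0, c), (1, c), (2, c)}

lemma tri_injective : Function.Injective tri := by
  intro l l' h
  revert h
  revert l l'
  decide

lemma tri_clique (l : ZMod 4 ⊕ ZMod 4) : rook.IsNClique 3 (tri l) := by
  revert l; decide

lemma tri_inter (l l' : ZMod 4 ⊕ ZMod 4) (h : l ≠ l') : (tri l ∩ tri l').card ≤ 1 := by
  revert h; revert l l'; decide

def P₀ : Finset (Finset (ZMod 4 × ZMod 4)) := Finset.univ.image tri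
lemma upper_bound (P : Finset (Finset (ZMod 4 × ZMod 4)))
    (hc : ∀ t ∈ P, rook.IsNClique 3 t)
    (hd : ∀ t₁ ∈ P, ∀ t₂ ∈ P, t₁ ≠ t₂ → Disjoint (triEdges rook t₁) (triEdges rook t₂)) :
    P.card ≤ 8 := by
  have hinj : Set.InjOn lineOf P := by
    intro t₁ h₁ t₂ h₂ heq
    by_contra hne
    have hsub₁ : t₁ ⊆ lineSet (lineOf t₁) := subset_lineOf t₁ (hc t₁ h₁)
    have hsub₂ : t₂ ⊆ lineSet (lineOf t₁) := heq ▸ subset_lineOf t₂ (hc t₂ h₂)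
    have hu4 : (t₁ ∪ t₂).card ≤ 4 := by
      have := Finset.card_le_card (Finset.union_subset hsub₁ hsub₂)
      rwa [card_lineSet] at this
    have hsum := Finset.card_union_add_card_inter t₁ t₂
    have hc1 : t₁.card = 3 := (hc t₁ h₁).2
    have hc2 : t₂.card = 3 := (hc t₂ h₂).2
    have hint : 1 < (t₁ ∩ t₂).card := by omega
    obtain ⟨u, hu', v, hv', huv⟩ := Finset.one_lt_card.1 hint
    rw [Finset.mem_inter] at hu' hv'
    have hadj : rook.Adj u v :=
      adj_of_mem_lineSet (lineOf t₁) u v (hsub₁ hu'.1) (hsub₁ hv'.1) huv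
    have he₁ : s(u, v) ∈ triEdges rook t₁ := by
      refine ⟨hadj, fun w hw => ?_⟩
      rcases Sym2.mem_iff.1 hw with rfl | rfl
      · exact hu'.1
      · exact hv'.1
    have he₂ : s(u, v) ∈ triEdges rook t₂ := by
      refine ⟨hadj, fun w hw => ?_⟩
      rcases Sym2.mem_iff.1 hw with rfl | rfl
      · exact hu'.2
      · exact hv'.2
    exact Set.disjoint_left.1 (hd t₁ h₁ t₂ h₂ hne) he₁ he₂
  calc P.card ≤ (Finset.univ : Finset (ZMod 4 ⊕ ZMod 4)).card :=
        Finset.card_le_card_of_injOn lineOf (fun _ _ => Finset.mem_univ _) hinj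
    _ = 8 := by decide

set_option maxRecDepth 4000 in
theorem stmt13 :
    sSup {k : ℕ | ∃ P : Finset (Finset (ZMod 4 × ZMod 4)),
        (∀ t ∈ P, rook.IsNClique 3 t) ∧
        (∀ t₁ ∈ P, ∀ t₂ ∈ P, t₁ ≠ t₂ → Disjoint (triEdges rook t₁) (triEdges rook t₂)) ∧
        P.card = k} = 8 := by
  have h8 : (8 : ℕ) ∈ {k : ℕ | ∃ P : Finset (Finset (ZMod 4 × ZMod 4)),
      (∀ t ∈ P, rook.IsNClique 3 t) ∧
      (∀ t₁ ∈ P, ∀ t₂ ∈ P, t₁ ≠ t₂ → Disjoint (triEdges rook t₁) (triEdges rook t₂)) ∧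
      P.card = k} := by
    refine ⟨P₀, ?_, ?_, ?_⟩
    · intro t ht
      obtain ⟨l, -, rfl⟩ := Finset.mem_image.1 ht
      exact tri_clique l
    · intro t₁ h₁ t₂ h₂ hne
      obtain ⟨l₁, -, rfl⟩ := Finset.mem_image.1 h₁
      obtain ⟨l₂, -, rfl⟩ := Finset.mem_image.1 h₂
      have hll : l₁ ≠ l₂ := fun h => hne (by rw [h])
      exact disj_of_small_inter rook _ _ (tri_inter l₁ l₂ hll)
    · rw [P₀, Finset.card_image_of_injective _ tri_injective]
      decide
  have hbdd : ∀ k ∈ {k : ℕ | ∃ P : Finset (Finset (ZMod 4 × ZMod 4)),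
      (∀ t ∈ P, rook.IsNClique 3 t) ∧
      (∀ t₁ ∈ P, ∀ t₂ ∈ P, t₁ ≠ t₂ → Disjoint (triEdges rook t₁) (triEdges rook t₂)) ∧
      P.card = k}, k ≤ 8 := by
    rintro k ⟨P, h1, h2, rfl⟩
    exact upper_bound P h1 h2
  exact le_antisymm (csSup_le ⟨8, h8⟩ hbdd) (le_csSup ⟨8, hbdd⟩ h8)
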